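/- Let A be a commutative ring and suppose ω : {(i,j) : i < j} → A is a family of elements in A satisfying ω_{i,j}² = 0 for all i < j and the three-term relations ω_{i,j}·ω_{i,k} − ω_{i,j}·ω_{j,k} + ω_{i,k}·ω_{j,k} = 0 for all i < j < k. Then for any strictly increasing sequence J = (j₁,…,j_ℓ) and any r > j_ℓ: ω_{j₁,r}·ω_{j₂,r}⋯ω_{j_ℓ,r} = (−1)^ℓ · Σ_I (−1)^{d_I} · ω_{i₁,j₂}·ω_{i₂,j₃}⋯ω_{i_{ℓ−1},j_ℓ}·ω_{i_ℓ,r}, where the sum ranges over all J-admissible sequences I = (i₁,…,i_ℓ) and d_I denotes the number of distinct values appearing in I. -/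

import Mathlib

/-- `Adm ℓ J I` : the length-`ℓ` sequence `I` is `J`-admissible (0-indexed).
For `ℓ = 1`, `I` is admissible iff `I = J`; for `ℓ ≥ 2`, `I` is admissible iff
`I` is nondecreasing, its truncation is admissible for the truncation of `J`,
and the last entry of `I` equals either the previous entry of `I` or the last entry of `J`. -/
def Adm : (ℓ : ℕ) → (Fin ℓ → ℕ) → (Fin ℓ → ℕ) → Prop
  | 0, _, _ => True
  | 1, J, I => I 0 = J 0
  | (n + 2), J, I =>
      (∀ k : Fin (n + 1), I k.castSucc ≤ I k.succ) ∧
      Adm (n + 1) (fun k => J k.castSucc) (fun k => I k.castSucc) ∧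
      (I (Fin.last (n + 1)) = I ⟨n, by omega⟩ ∨ I (Fin.last (n + 1)) = J (Fin.last (n + 1)))


/-- The number of distinct values appearing in a finite sequence. -/
def distinctCount {m : ℕ} (I : Fin m → ℕ) : ℕ := (Finset.image I Finset.univ).card

/-!
Induction on `ℓ`. A `J`-admissible sequence of length `ℓ + 1` is an admissible sequence `I'`
for the truncation of `J`, extended either by its own last entry `a` or by `b = j_{ℓ+1}`;
since `a ≤ j_ℓ < b`, only the second extension adds a new value. Multiplying the identity
for `ℓ` by `ω_{b,r}` and rewriting `ω_{a,r} ω_{b,r} = ω_{a,b} ω_{b,r} - ω_{a,b} ω_{a,r}` by the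
three-term relation produces exactly these two extensions, with their signs.
-/

namespace Adm

theorem monotone : ∀ {ℓ : ℕ} {J I : Fin ℓ → ℕ}, Adm ℓ J I → Monotone I
  | 0, _, _, _ => fun a => a.elim0
  | 1, _, I, _ => fun a b _ => (congrArg I (Subsingleton.elim a b)).le
  | _ + 2, _, _, h => Fin.monotone_iff_le_succ.mpr h.1

theorem le : ∀ {ℓ : ℕ} {J I : Fin ℓ → ℕ}, Monotone J → Adm ℓ J I → I ≤ J
  | 0, _, _, _, _ => fun k => k.elim0
  | 1, _, _, _, h => fun k => by rw [Subsingleton.elim k 0]; exact le_of_eq h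
  | _ + 2, _, _, hJ, ⟨_, hinit, hlast⟩ => by
      have hle := le (hJ.comp Fin.strictMono_castSucc.monotone) hinit
      intro k
      induction k using Fin.lastCases with
      | cast k => exact hle k
      | last =>
          rcases hlast with h | h
          · exact h.trans_le ((hle (Fin.last _)).trans (hJ (Fin.castSucc_lt_last _).le))
          · exact h.le

end Adm

theorem finite_setOf_adm {ℓ : ℕ} {J : Fin ℓ → ℕ} (hJ : Monotone J) :
    {I : Fin ℓ → ℕ | Adm ℓ J I}.Finite :=
  (Set.finite_Iic J).subset fun _ hI => Adm.le hJ hI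

theorem setOf_adm_one (J : Fin 1 → ℕ) : {I : Fin 1 → ℕ | Adm 1 J I} = {J} := by
  ext I
  refine ⟨fun h => funext fun k => ?_, fun h => by subst h; rfl⟩
  rw [Subsingleton.elim k 0]
  exact h

theorem adm_succ_succ_iff {n : ℕ} {J I : Fin (n + 2) → ℕ} (hJ : Monotone J) :
    Adm (n + 2) J I ↔ Adm (n + 1) (Fin.init J) (Fin.init I) ∧
      (I (Fin.last (n + 1)) = I (Fin.last n).castSucc ∨
        I (Fin.last (n + 1)) = J (Fin.last (n + 1))) := by
  refine ⟨fun h => h.2, fun ⟨hinit, hlast⟩ => ⟨fun k => ?_, hinit, hlast⟩⟩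
  induction k using Fin.lastCases with
  | cast k => simpa [Fin.init] using hinit.monotone (Fin.castSucc_le_succ k)
  | last =>
      rw [Fin.succ_last]
      rcases hlast with h | h
      · exact h.ge
      · exact h ▸ (Adm.le (hJ.comp Fin.strictMono_castSucc.monotone) hinit _).trans
          (hJ (Fin.castSucc_lt_last _).le)

theorem setOf_adm_succ_succ {n : ℕ} {J : Fin (n + 2) → ℕ} (hJ : Monotone J) :
    {I | Adm (n + 2) J I} =
      (fun I => Fin.snoc I (I (Fin.last n))) '' {I | Adm (n + 1) (Fin.init J) I} ∪
        (fun I => Fin.snoc I (J (Fin.last (n + 1)))) '' {I | Adm (n + 1) (Fin.init J) I} := by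
  ext I
  simp only [Set.mem_ofPred_eq, Set.mem_union, Set.mem_image, adm_succ_succ_iff hJ]
  constructor
  · rintro ⟨hinit, h | h⟩
    · refine .inl ⟨Fin.init I, hinit, ?_⟩
      change Fin.snoc _ (I (Fin.last n).castSucc) = I
      rw [← h, Fin.snoc_init_self]
    · exact .inr ⟨Fin.init I, hinit, by rw [← h, Fin.snoc_init_self]⟩
  · rintro (⟨I, hI, rfl⟩ | ⟨I, hI, rfl⟩) <;> simp [Fin.init_snoc, hI]

theorem finsum_mem_adm_succ_succ {M : Type*} [AddCommMonoid M] {n : ℕ}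
    {J : Fin (n + 2) → ℕ} (hJ : StrictMono J) (f : (Fin (n + 2) → ℕ) → M) :
    ∑ᶠ I ∈ {I | Adm (n + 2) J I}, f I =
      ∑ᶠ I ∈ {I | Adm (n + 1) (Fin.init J) I},
        (f (Fin.snoc I (I (Fin.last n))) + f (Fin.snoc I (J (Fin.last (n + 1))))) := by
  have hJinit : Monotone (Fin.init J) := hJ.monotone.comp Fin.strictMono_castSucc.monotone
  have hfin := finite_setOf_adm hJinit
  rw [setOf_adm_succ_succ hJ.monotone, finsum_mem_union ?_ (hfin.image _) (hfin.image _),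
    finsum_mem_image fun _ _ _ _ h => (Fin.snoc_inj.mp h).1,
    finsum_mem_image fun _ _ _ _ h => (Fin.snoc_inj.mp h).1, finsum_mem_add_distrib hfin]
  rw [Set.disjoint_left]
  rintro _ ⟨I, hI, rfl⟩ ⟨I', -, heq⟩
  have hlt : I (Fin.last n) < J (Fin.last (n + 1)) :=
    (Adm.le hJinit hI (Fin.last n)).trans_lt (hJ (Fin.castSucc_lt_last _))
  exact hlt.ne (Fin.snoc_inj.mp heq).2.symm

theorem image_univ_snoc {α : Type*} [DecidableEq α] {m : ℕ} (I : Fin m → α) (a : α) :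
    Finset.image (Fin.snoc I a : Fin (m + 1) → α) Finset.univ =
      insert a (Finset.image I Finset.univ) := by
  apply Finset.coe_injective
  simp [Fin.range_snoc]

theorem distinctCount_snoc_of_mem {m : ℕ} (I : Fin m → ℕ) {a : ℕ} (ha : a ∈ Set.range I) :
    distinctCount (Fin.snoc I a : Fin (m + 1) → ℕ) = distinctCount I := by
  obtain ⟨k, rfl⟩ := ha
  rw [distinctCount, image_univ_snoc,
    Finset.insert_eq_of_mem (Finset.mem_image_of_mem I (Finset.mem_univ k)), distinctCount]

theorem distinctCount_snoc_of_notMem {m : ℕ} (I : Fin m → ℕ) {a : ℕ} (ha : a ∉ Set.range I) :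
    distinctCount (Fin.snoc I a : Fin (m + 1) → ℕ) = distinctCount I + 1 := by
  rw [distinctCount, image_univ_snoc, Finset.card_insert_of_notMem (by simpa using ha),
    distinctCount]

theorem stmt_5_general {A : Type*} [CommRing A] (ω : ℕ → ℕ → A)
    (h3 : ∀ i j k, i < j → j < k → ω i j * ω i k - ω i j * ω j k + ω i k * ω j k = 0)
    (n : ℕ) (J : Fin (n + 1) → ℕ) (hJ : StrictMono J) (r : ℕ)
    (hr : ∀ k, J k < r) :
    (∏ k : Fin (n + 1), ω (J k) r) =
      (-1 : A) ^ (n + 1) *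
        ∑ᶠ I ∈ {I : Fin (n + 1) → ℕ | Adm (n + 1) J I},
          ((-1 : A) ^ distinctCount I *
            ((∏ k : Fin n, ω (I k.castSucc) (J k.succ)) * ω (I (Fin.last n)) r)) := by
  induction n with
  | zero =>
      rw [setOf_adm_one, finsum_mem_singleton]
      simp [distinctCount]
  | succ n ih =>
      have hJinit : StrictMono (Fin.init J) := hJ.comp Fin.strictMono_castSucc
      have hfin := finite_setOf_adm hJinit.monotone
      rw [Fin.prod_univ_castSucc]
      change (∏ k, ω (Fin.init J k) r) * _ = _
      rw [ih (Fin.init J) hJinit fun k => hr _, finsum_mem_adm_succ_succ hJ, mul_assoc,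
        finsum_mem_mul' _ _ hfin, mul_finsum_mem' _ _ hfin, mul_finsum_mem' _ _ hfin]
      refine finsum_mem_congr rfl fun I hI => ?_
      have hlt : ∀ k, I k < J (Fin.last (n + 1)) := fun k =>
        (Adm.le hJinit.monotone hI k).trans_lt (hJ (Fin.castSucc_lt_last _))
      rw [distinctCount_snoc_of_mem I ⟨Fin.last n, rfl⟩,
        distinctCount_snoc_of_notMem I fun ⟨k, hk⟩ => (hlt k).ne hk]
      simp only [Fin.prod_univ_castSucc, Fin.snoc_castSucc, Fin.snoc_last, Fin.succ_last,
        Fin.succ_castSucc, Fin.init, Nat.succ_eq_add_one]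
      linear_combination (-1 : A) ^ (n + 1) * (-1 : A) ^ distinctCount I *
        (∏ k : Fin n, ω (I k.castSucc) (J k.succ.castSucc)) *
        h3 (I (Fin.last n)) (J (Fin.last (n + 1))) r (hlt _) (hr _)

/-- the rewriting identity.  If `ω_{i,j}² = 0` and the three-term
relations hold, then for any strictly increasing `J = (j₁,…,j_ℓ)` (here of
length `n+1`) and any `r > j_ℓ`,
`ω_{j₁,r}⋯ω_{j_ℓ,r} = (−1)^ℓ Σ_I (−1)^{d_I} ω_{i₁,j₂}⋯ω_{i_{ℓ−1},j_ℓ} ω_{i_ℓ,r}`,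
the sum over all `J`-admissible sequences `I`. -/
theorem stmt_5 {A : Type*} [CommRing A] (ω : ℕ → ℕ → A)
    (hsq : ∀ i j, i < j → ω i j * ω i j = 0)
    (h3 : ∀ i j k, i < j → j < k → ω i j * ω i k - ω i j * ω j k + ω i k * ω j k = 0)
    (n : ℕ) (J : Fin (n + 1) → ℕ) (hJ : StrictMono J) (r : ℕ)
    (hr : ∀ k, J k < r) :
    (∏ k : Fin (n + 1), ω (J k) r) =
      (-1 : A) ^ (n + 1) *
        ∑ᶠ I ∈ {I : Fin (n + 1) → ℕ | Adm (n + 1) J I},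
          ((-1 : A) ^ distinctCount I *
            ((∏ k : Fin n, ω (I k.castSucc) (J k.succ)) * ω (I (Fin.last n)) r)) :=
  stmt_5_general ω h3 n J hJ r hr
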